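/- Let (D_n) and (λ_n) be sequences of real numbers with 0 < D_n ≤ 1/4, D_n → 0, λ_n > 1, λ_n² − 1 → 0, and suppose λ_n² − 1 ≥ D_n for all n. Let ρ > 0 and suppose (B_n) is a sequence of positive reals with B_n ≥ ρ·((λ_n^{2D_n} + 3)/(λ_n^{2D_n} − 1))^{1/(2D_n)} for all n. Then 1/(B_n·(λ_n² − 1)) → 0 as n → ∞. -/

import Mathlib

/-!
Write `ε = λ² - 1` and `a = λ^{2D} = (1 + ε)^D`. Bernoulli's inequality gives `a - 1 ≤ D ε ≤ ε / 4`,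
so the ratio `(a + 3) / (a - 1)` is at least `16 / ε`. Once `ε ≤ 16` this base is at least `1`, and
the exponent `1 / (2D)` is at least `2`, so `B ≥ ρ (16 / ε)²`. Hence `B ε ≥ 256 ρ / ε → ∞`.
-/

open Filter Real Topology

lemma rpow_two_mul_sub_one_le {x d : ℝ} (hx : 0 ≤ x) (hd0 : 0 ≤ d) (hd1 : d ≤ 1) :
    x ^ (2 * d) - 1 ≤ d * (x ^ 2 - 1) := by
  have hbern := rpow_one_add_le_one_add_mul_self (s := x ^ 2 - 1) (by nlinarith) hd0 hd1
  rw [add_sub_cancel] at hbern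
  rw [rpow_mul hx, rpow_two]
  linarith

lemma div_sq_sub_one_le_ratio {x d : ℝ} (hx : 1 < x) (hd0 : 0 < d) (hd : d ≤ 1 / 4) :
    16 / (x ^ 2 - 1) ≤ (x ^ (2 * d) + 3) / (x ^ (2 * d) - 1) := by
  have hε : 0 < x ^ 2 - 1 := by nlinarith
  have ha : 1 < x ^ (2 * d) := one_lt_rpow hx (by positivity)
  have hbern := rpow_two_mul_sub_one_le (x := x) (d := d) (by linarith) hd0.le (by linarith)
  calc 16 / (x ^ 2 - 1) = 4 / ((x ^ 2 - 1) / 4) := by field_simp; norm_num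
    _ ≤ (x ^ (2 * d) + 3) / (x ^ (2 * d) - 1) :=
      div_le_div₀ (by linarith) (by linarith) (by linarith) (by nlinarith)

lemma sq_div_sq_sub_one_le_ratio_rpow {x d : ℝ} (hx : 1 < x) (hx16 : x ^ 2 - 1 ≤ 16)
    (hd0 : 0 < d) (hd : d ≤ 1 / 4) :
    (16 / (x ^ 2 - 1)) ^ 2 ≤ ((x ^ (2 * d) + 3) / (x ^ (2 * d) - 1)) ^ (1 / (2 * d)) := by
  have hε : 0 < x ^ 2 - 1 := by nlinarith
  have hbase : 1 ≤ 16 / (x ^ 2 - 1) := (one_le_div hε).mpr hx16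
  have hexp : 2 ≤ 1 / (2 * d) := by rw [le_div_iff₀ (by positivity)]; linarith
  calc (16 / (x ^ 2 - 1)) ^ 2 = (16 / (x ^ 2 - 1)) ^ (2 : ℝ) := (rpow_two _).symm
    _ ≤ (16 / (x ^ 2 - 1)) ^ (1 / (2 * d)) := rpow_le_rpow_of_exponent_le hbase hexp
    _ ≤ _ := rpow_le_rpow (by positivity) (div_sq_sub_one_le_ratio hx hd0 hd) (by positivity)

lemma div_sq_sub_one_le_mul_sq_sub_one {x d ρ b : ℝ} (hρ : 0 < ρ) (hx : 1 < x)
    (hx16 : x ^ 2 - 1 ≤ 16) (hd0 : 0 < d) (hd : d ≤ 1 / 4)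
    (hb : ρ * ((x ^ (2 * d) + 3) / (x ^ (2 * d) - 1)) ^ (1 / (2 * d)) ≤ b) :
    256 * ρ / (x ^ 2 - 1) ≤ b * (x ^ 2 - 1) := by
  have hε : 0 < x ^ 2 - 1 := by nlinarith
  have hb' : ρ * (16 / (x ^ 2 - 1)) ^ 2 ≤ b :=
    (mul_le_mul_of_nonneg_left (sq_div_sq_sub_one_le_ratio_rpow hx hx16 hd0 hd) hρ.le).trans hb
  calc 256 * ρ / (x ^ 2 - 1) = ρ * (16 / (x ^ 2 - 1)) ^ 2 * (x ^ 2 - 1) := by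
        field_simp; norm_num
    _ ≤ b * (x ^ 2 - 1) := mul_le_mul_of_nonneg_right hb' hε.le

theorem stmt_17_general (D lam B : ℕ → ℝ) (ρ : ℝ) (hρ : 0 < ρ)
    (hD0 : ∀ n, 0 < D n) (hD14 : ∀ n, D n ≤ 1 / 4)
    (hlam : ∀ n, 1 < lam n)
    (hlamlim : Filter.Tendsto (fun n => lam n ^ 2 - 1) Filter.atTop (nhds 0))
    (hB : ∀ n, ρ * ((lam n ^ (2 * D n) + 3) / (lam n ^ (2 * D n) - 1)) ^ (1 / (2 * D n)) ≤ B n) :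
    Filter.Tendsto (fun n => 1 / (B n * (lam n ^ 2 - 1))) Filter.atTop (nhds 0) := by
  have hsmall : ∀ᶠ n in atTop, lam n ^ 2 - 1 ≤ 16 :=
    hlamlim.eventually (eventually_le_nhds (by norm_num))
  have hlow : ∀ᶠ n in atTop, 256 * ρ / (lam n ^ 2 - 1) ≤ B n * (lam n ^ 2 - 1) :=
    hsmall.mono fun n h =>
      div_sq_sub_one_le_mul_sq_sub_one hρ (hlam n) h (hD0 n) (hD14 n) (hB n)
  have hlim : Tendsto (fun n => (lam n ^ 2 - 1) / (256 * ρ)) atTop (𝓝 0) := by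
    simpa using hlamlim.div_const (256 * ρ)
  have hpos : ∀ n, 0 < 256 * ρ / (lam n ^ 2 - 1) := fun n => by
    have := hlam n
    exact div_pos (by positivity) (by nlinarith)
  refine squeeze_zero' (hlow.mono fun n h => ?_) (hlow.mono fun n h => ?_) hlim
  · exact one_div_nonneg.mpr ((hpos n).le.trans h)
  · calc 1 / (B n * (lam n ^ 2 - 1)) ≤ 1 / (256 * ρ / (lam n ^ 2 - 1)) :=
          one_div_le_one_div_of_le (hpos n) h
      _ = (lam n ^ 2 - 1) / (256 * ρ) := one_div_div _ _

theorem stmt_17 (D lam B : ℕ → ℝ) (ρ : ℝ) (hρ : 0 < ρ)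
    (hD0 : ∀ n, 0 < D n) (hD14 : ∀ n, D n ≤ 1 / 4)
    (hDlim : Filter.Tendsto D Filter.atTop (nhds 0))
    (hlam : ∀ n, 1 < lam n)
    (hlamlim : Filter.Tendsto (fun n => lam n ^ 2 - 1) Filter.atTop (nhds 0))
    (hlamD : ∀ n, D n ≤ lam n ^ 2 - 1)
    (hB : ∀ n, ρ * ((lam n ^ (2 * D n) + 3) / (lam n ^ (2 * D n) - 1)) ^ (1 / (2 * D n)) ≤ B n)
    (hBpos : ∀ n, 0 < B n) :
    Filter.Tendsto (fun n => 1 / (B n * (lam n ^ 2 - 1))) Filter.atTop (nhds 0) :=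
  stmt_17_general D lam B ρ hρ hD0 hD14 hlam hlamlim hB
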